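/- If f(x) = Σ_{n≥0} a(n)x^n is a formal power series with a(0) arbitrary and a(n) = F(n)·a(n−1) for n ≥ 1, then f(x) = c₁'·x·f(α₊x) + c₂'·x·f(α₋x) + a(0), where α₊ = (1+√5)/2, α₋ = (1−√5)/2, c₁' = α₊/√5, c₂' = −α₋/√5; here F(n) = (α₊^n − α₋^n)/√5 is the Fibonacci number. -/

import Mathlib

open PowerSeries

/-- If `a(n) = F(n) a(n-1)` (Fibonacci via Binet's formula), then the
generating function satisfies `f(x) = c₁' x f(α₊ x) + c₂' x f(α₋ x) + a(0)`,
where `α₊ = (1+√5)/2`, `α₋ = (1-√5)/2`, `c₁' = α₊/√5`, `c₂' = -α₋/√5`. -/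
theorem xrecursive_fib_genfun
    (a : ℕ → ℝ)
    (F : ℕ → ℝ)
    (hF : ∀ n : ℕ, F n =
      (((1 + Real.sqrt 5) / 2) ^ n - ((1 - Real.sqrt 5) / 2) ^ n) / Real.sqrt 5)
    (ha : ∀ n : ℕ, 1 ≤ n → a n = F n * a (n - 1)) :
    PowerSeries.mk a =
      PowerSeries.C (((1 + Real.sqrt 5) / 2) / Real.sqrt 5) * PowerSeries.X *
          PowerSeries.rescale ((1 + Real.sqrt 5) / 2) (PowerSeries.mk a) +
        PowerSeries.C (-((1 - Real.sqrt 5) / 2) / Real.sqrt 5) * PowerSeries.X *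
          PowerSeries.rescale ((1 - Real.sqrt 5) / 2) (PowerSeries.mk a) +
        PowerSeries.C (a 0) := by
  ext n
  cases n with
  | zero => simp
  | succ n =>
    have h := ha (n + 1) (by omega)
    simp only [Nat.add_sub_cancel] at h
    simp [mul_assoc, coeff_succ_X_mul, coeff_rescale, h, hF, pow_succ]
    ring
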